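/- arXiv:1901.08655 — 4 statements merged into one kernel-verified Lean document; each statement's English description precedes it below -/
import Mathlib

section
/- Let A be an invertible n×n real matrix. Then Σ_{i=1}^{n} s_i(A⁻¹)² = Σ_{i=1}^{n} dist(col_i(A), span{col_j(A) : j ≠ i})^{−2}, i.e., the squared Hilbert–Schmidt norm of A⁻¹ equals the sum over the columns of A of the inverse squared Euclidean distances from each column to the span of the remaining columns. -/
open MeasureTheory ProbabilityTheory Real

/-- The (unordered) singular values of a rectangular real matrix `B`: the square roots of the
eigenvalues of the Hermitian matrix `B * Bᴴ`. -/
noncomputable def svRect {m n : ℕ} (B : Matrix (Fin m) (Fin n) ℝ) : Fin m → ℝ :=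
  fun i => Real.sqrt ((Matrix.isHermitian_mul_conjTranspose_self B).eigenvalues i)

/-- `svDesc B i` is the `(i : ℕ) + 1`-st largest singular value of `B`, i.e. the singular values
arranged in non-increasing order, `0`-indexed. -/
noncomputable def svDesc {m n : ℕ} (B : Matrix (Fin m) (Fin n) ℝ) (i : Fin m) : ℝ :=
  (svRect B ∘ Tuple.sort (svRect B)) i.rev

/-- The smallest singular value of a square matrix. -/
noncomputable def sMin {n : ℕ} (A : Matrix (Fin n) (Fin n) ℝ) : ℝ := ⨅ i, svRect A i

/-- The largest singular value of a square matrix. -/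
noncomputable def sMax {n : ℕ} (A : Matrix (Fin n) (Fin n) ℝ) : ℝ := ⨆ i, svRect A i

/-- The Hilbert–Schmidt (Frobenius) norm of a matrix. -/
noncomputable def hsNorm {m n : ℕ} (B : Matrix (Fin m) (Fin n) ℝ) : ℝ :=
  Real.sqrt (∑ i, ∑ j, B i j ^ 2)

/-- The operator (spectral) norm `ℓ₂ → ℓ₂` of a square matrix. -/
noncomputable def opNorm {n : ℕ} (A : Matrix (Fin n) (Fin n) ℝ) : ℝ :=
  ‖LinearMap.toContinuousLinearMap (Matrix.toEuclideanLin A)‖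

/-- View a plain vector as an element of Euclidean space (so that `‖·‖` is the Euclidean norm). -/
def ev {n : ℕ} (v : Fin n → ℝ) : EuclideanSpace ℝ (Fin n) := WithLp.toLp 2 v

/-- The `j`-th column of a matrix, as a vector in Euclidean space. -/
def colE {m n : ℕ} (A : Matrix (Fin m) (Fin n) ℝ) (j : Fin n) :
    EuclideanSpace ℝ (Fin m) := ev (fun i => A i j)

/-- `colRestrict B J = B * P_J`: the matrix `B` with all columns outside `J` replaced by zero. -/
def colRestrict {m n : ℕ} (B : Matrix (Fin m) (Fin n) ℝ) (J : Finset (Fin n)) :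
    Matrix (Fin m) (Fin n) ℝ := fun i j => if j ∈ J then B i j else 0

/-- A real random variable has subgaussian moment bounded above by `K`:
`ℙ {|ξ| ≥ t} ≤ exp (1 - t ^ 2 / (2 * K ^ 2))` for all `t ≥ 0`. -/
def SubGTail {Ω : Type*} [MeasureSpace Ω] (ξ : Ω → ℝ) (K : ℝ) : Prop :=
  ∀ t : ℝ, 0 ≤ t → ℙ {ω | t ≤ |ξ ω|} ≤ ENNReal.ofReal (Real.exp (1 - t ^ 2 / (2 * K ^ 2)))

/-- A random `n × n` matrix has i.i.d. entries of zero mean, unit variance and subgaussian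
moment bounded above by `K`. -/
def IIDEntries {Ω : Type*} [MeasureSpace Ω] {n : ℕ}
    (A : Ω → Matrix (Fin n) (Fin n) ℝ) (K : ℝ) : Prop :=
  (∀ i j : Fin n, Measurable fun ω => A ω i j) ∧
  iIndepFun (fun p : Fin n × Fin n => fun ω => A ω p.1 p.2) ℙ ∧
  (∀ i j k l : Fin n, IdentDistrib (fun ω => A ω i j) (fun ω => A ω k l) ℙ ℙ) ∧
  (∀ i j : Fin n, ∫ ω, A ω i j = 0) ∧
  (∀ i j : Fin n, ∫ ω, (A ω i j) ^ 2 = 1) ∧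
  (∀ i j : Fin n, SubGTail (fun ω => A ω i j) K)

/-- A random vector in `ℝⁿ` has i.i.d. coordinates of zero mean, unit variance and subgaussian
moment bounded above by `K`. -/
def IIDCoords {Ω : Type*} [MeasureSpace Ω] {n : ℕ}
    (X : Ω → EuclideanSpace ℝ (Fin n)) (K : ℝ) : Prop :=
  (∀ i : Fin n, Measurable fun ω => X ω i) ∧
  iIndepFun (fun i : Fin n => fun ω => X ω i) ℙ ∧
  (∀ i j : Fin n, IdentDistrib (fun ω => X ω i) (fun ω => X ω j) ℙ ℙ) ∧
  (∀ i : Fin n, ∫ ω, X ω i = 0) ∧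
  (∀ i : Fin n, ∫ ω, (X ω i) ^ 2 = 1) ∧
  (∀ i : Fin n, SubGTail (fun ω => X ω i) K)

/-! Row `i` of `A⁻¹` has inner product `δᵢⱼ` with column `j` of `A`, so the span of the columns
other than the `i`-th is exactly the hyperplane orthogonal to that row, and the distance from
column `i` to it is `1 / ‖rowᵢ(A⁻¹)‖`. Summing the squared row norms gives the squared
Frobenius norm of `A⁻¹`, which is `tr (A⁻¹ A⁻ᴴ)`, the sum of the squared singular values. -/

open InnerProductSpace
open scoped Matrix

section Hyperplane

variable {E : Type*} [NormedAddCommGroup E] [InnerProductSpace ℝ E]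

theorem infDist_orthogonal_singleton (b x : E) :
    Metric.infDist x ((ℝ ∙ b)ᗮ : Set E) = |⟪b, x⟫_ℝ| / ‖b‖ := by
  have foot_mem : x - (⟪b, x⟫_ℝ / ‖b‖ ^ 2) • b ∈ (ℝ ∙ b)ᗮ := by
    rw [Submodule.mem_orthogonal_singleton_iff_inner_right, inner_sub_right, inner_smul_right,
      real_inner_self_eq_norm_sq]
    rcases eq_or_ne b 0 with rfl | hb
    · simp
    · field_simp; ring
  refine le_antisymm ((Metric.infDist_le_dist_of_mem foot_mem).trans_eq ?_) ?_
  · rw [dist_eq_norm, sub_sub_cancel, norm_smul, Real.norm_eq_abs, abs_div,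
      abs_of_nonneg (sq_nonneg ‖b‖)]
    rcases eq_or_ne b 0 with rfl | hb
    · simp
    · field_simp
  · refine (Metric.le_infDist ⟨0, Submodule.zero_mem _⟩).2 fun y hy => ?_
    have hy : ⟪b, y⟫_ℝ = 0 := Submodule.mem_orthogonal_singleton_iff_inner_right.1 hy
    have : |⟪b, x⟫_ℝ| ≤ ‖b‖ * dist x y := by
      simpa [inner_sub_right, hy, dist_eq_norm] using abs_real_inner_le_norm b (x - y)
    exact div_le_of_le_mul₀ (norm_nonneg _) dist_nonneg (by linarith)

theorem span_image_ne_eq_orthogonal_singleton {ι : Type*} {v : ι → E}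
    (hv : Submodule.span ℝ (Set.range v) = ⊤) {b : E} {i : ι}
    (hb : ∀ j ≠ i, ⟪b, v j⟫_ℝ = 0) (hbi : ⟪b, v i⟫_ℝ ≠ 0) :
    Submodule.span ℝ (v '' {j | j ≠ i}) = (ℝ ∙ b)ᗮ := by
  have span_le : Submodule.span ℝ (v '' {j | j ≠ i}) ≤ (ℝ ∙ b)ᗮ := by
    rw [Submodule.span_le]
    rintro _ ⟨j, hj, rfl⟩
    exact Submodule.mem_orthogonal_singleton_iff_inner_right.2 (hb j hj)
  refine le_antisymm span_le fun y hy => ?_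
  have hy_span : y ∈ Submodule.span ℝ (insert (v i) (v '' {j | j ≠ i})) := by
    have insert_ne : insert i {j | j ≠ i} = Set.univ := by ext j; simp [em]
    rw [← Set.image_insert_eq, insert_ne, Set.image_univ, hv]
    trivial
  obtain ⟨c, z, hz, rfl⟩ := Submodule.mem_span_insert.1 hy_span
  have hc : c = 0 := by
    have := Submodule.mem_orthogonal_singleton_iff_inner_right.1 hy
    rw [inner_add_right, inner_smul_right,
      Submodule.mem_orthogonal_singleton_iff_inner_right.1 (span_le hz)] at this
    simpa [hbi] using this
  simpa [hc] using hz

end Hyperplane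

section Columns

variable {m n : ℕ}

theorem inner_ev_ev (u w : Fin n → ℝ) : ⟪ev u, ev w⟫_ℝ = u ⬝ᵥ w := by
  simp [ev, dotProduct, PiLp.inner_apply, mul_comm]

theorem inner_ev_row_colE {k : ℕ} (B : Matrix (Fin m) (Fin n) ℝ) (A : Matrix (Fin n) (Fin k) ℝ)
    (i : Fin m) (j : Fin k) : ⟪ev (B i), colE A j⟫_ℝ = (B * A) i j := by
  rw [colE, inner_ev_ev, Matrix.mul_apply, dotProduct]

theorem sum_smul_colE (A : Matrix (Fin m) (Fin n) ℝ) (c : Fin n → ℝ) :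
    ∑ j, c j • colE A j = ev (A *ᵥ c) := by
  ext k
  simp [colE, ev, Matrix.mulVec, dotProduct, mul_comm]

theorem span_range_colE_eq_top {A : Matrix (Fin n) (Fin n) ℝ} (hA : IsUnit A) :
    Submodule.span ℝ (Set.range (colE A)) = ⊤ := by
  refine Submodule.eq_top_iff'.2 fun y => ?_
  have : y = ∑ j, (A⁻¹ *ᵥ y.ofLp) j • colE A j := by
    rw [sum_smul_colE, Matrix.mulVec_mulVec,
      Matrix.mul_nonsing_inv _ ((A.isUnit_iff_isUnit_det).1 hA), Matrix.one_mulVec]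
    rfl
  rw [this]
  exact Submodule.sum_mem _ fun j _ => Submodule.smul_mem _ _ (Submodule.subset_span ⟨j, rfl⟩)

theorem sum_svRect_sq (B : Matrix (Fin m) (Fin n) ℝ) :
    ∑ i, svRect B i ^ 2 = ∑ i, ‖ev (B i)‖ ^ 2 := by
  have hB := Matrix.isHermitian_mul_conjTranspose_self B
  calc ∑ i, svRect B i ^ 2 = ∑ i, hB.eigenvalues i :=
        Finset.sum_congr rfl fun i _ =>
          Real.sq_sqrt (Matrix.eigenvalues_self_mul_conjTranspose_nonneg B i)
    _ = (B * Bᴴ).trace := by rw [hB.trace_eq_sum_eigenvalues]; simp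
    _ = ∑ i, ‖ev (B i)‖ ^ 2 := Finset.sum_congr rfl fun i _ => by
        rw [← real_inner_self_eq_norm_sq, inner_ev_ev]
        simp [Matrix.mul_apply, dotProduct]

end Columns

/-- (Negative second moment identity.) For an invertible `n × n` real matrix,
`∑ᵢ sᵢ(A⁻¹)² = ∑ᵢ dist (colᵢ(A), span {colⱼ(A) : j ≠ i})⁻²`. -/
theorem negative_second_moment (n : ℕ) (A : Matrix (Fin n) (Fin n) ℝ) (hA : IsUnit A) :
    ∑ i, svRect A⁻¹ i ^ 2 =
      ∑ i, (Metric.infDist (colE A i)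
          (Submodule.span ℝ (colE A '' {j | j ≠ i}) : Set (EuclideanSpace ℝ (Fin n))) ^ 2)⁻¹ := by
  rw [sum_svRect_sq]
  refine Finset.sum_congr rfl fun i _ => ?_
  have biorthogonal : ∀ j, ⟪ev (A⁻¹ i), colE A j⟫_ℝ = (1 : Matrix (Fin n) (Fin n) ℝ) i j := by
    intro j
    rw [inner_ev_row_colE, Matrix.nonsing_inv_mul _ ((A.isUnit_iff_isUnit_det).1 hA)]
  rw [span_image_ne_eq_orthogonal_singleton (span_range_colE_eq_top hA)
      (fun j hj => by rw [biorthogonal, Matrix.one_apply_ne' hj]) (by simp [biorthogonal]),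
    infDist_orthogonal_singleton, biorthogonal, Matrix.one_apply_eq, abs_one, one_div, inv_pow,
    inv_inv]
end

section
/- Let A be an n×n random matrix with i.i.d. entries of zero mean, unit variance, and subgaussian moment bounded above by K>0. Then there exists a constant c₁ > 0 depending only on K such that P{‖A‖ ≤ √n/2} ≤ exp(−c₁·n²), where ‖A‖ denotes the operator (spectral) norm. -/
/-! If `‖A‖ ≤ √n / 2`, every column of `A` has Euclidean norm at most `√n / 2`, so
`∑ᵢⱼ aᵢⱼ² ≤ n² / 4`: a quarter of the mean `n²` of this sum of `n²` independent terms.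
A Chernoff bound for its lower tail gives `exp (-c n²)` as soon as each term satisfies
`𝔼 exp (-aᵢⱼ² / b) ≤ exp (-3 / (8 b))`. This follows from the subgaussian tail: truncating `ξ²` at a
level `b = b(K)` loses at most `1/4` of the second moment, and on `[0, b]` the convex function
`x ↦ exp (-x / b)` lies below its chord `1 - (1 - e⁻¹) x / b`. -/

open MeasureTheory ProbabilityTheory Real

lemma sum_sq_col_le_opNorm_sq {n : ℕ} (M : Matrix (Fin n) (Fin n) ℝ) (j : Fin n) :
    ∑ i, M i j ^ 2 ≤ opNorm M ^ 2 := by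
  set L := LinearMap.toContinuousLinearMap (Matrix.toEuclideanLin M)
  have hcol : ‖L (EuclideanSpace.single j 1)‖ ^ 2 = ∑ i, M i j ^ 2 := by
    simp [L, EuclideanSpace.norm_sq_eq, Matrix.mulVec_single]
  have hle : ‖L (EuclideanSpace.single j 1)‖ ≤ opNorm M := by
    simpa [L, opNorm] using L.le_opNorm (EuclideanSpace.single j 1)
  rw [← hcol]
  gcongr

lemma sum_sq_entries_le_card_mul_opNorm_sq {n : ℕ} (M : Matrix (Fin n) (Fin n) ℝ) :
    ∑ i, ∑ j, M i j ^ 2 ≤ n * opNorm M ^ 2 := by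
  rw [Finset.sum_comm]
  simpa using Finset.sum_le_sum fun j (_ : j ∈ Finset.univ) => sum_sq_col_le_opNorm_sq M j

lemma exp_neg_div_le_one_sub_min {x b : ℝ} (hx : 0 ≤ x) (hb : 0 < b) :
    exp (-(x / b)) ≤ 1 - (1 - exp (-1)) * (min x b / b) := by
  rcases le_total x b with hxb | hbx
  · have hy : x / b ∈ Set.Icc (0 : ℝ) 1 := ⟨by positivity, (div_le_one hb).2 hxb⟩
    have := convexOn_exp.2 (Set.mem_univ (-1 : ℝ)) (Set.mem_univ 0) hy.1 (sub_nonneg.2 hy.2)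
      (add_sub_cancel _ _)
    simp only [smul_eq_mul, mul_neg, mul_one, mul_zero, add_zero, exp_zero] at this
    rw [min_eq_left hxb]
    linarith
  · rw [min_eq_right hbx, div_self hb.ne', mul_one, sub_sub_cancel]
    exact exp_le_exp.2 (neg_le_neg ((le_div_iff₀ hb).2 (by linarith)))

lemma integral_le_of_meas_lt_le_exp {α : Type*} [MeasurableSpace α] {μ : Measure α}
    {g : α → ℝ} (hg : 0 ≤ᵐ[μ] g) (hgm : AEMeasurable g μ) {C s : ℝ} (hC : 0 ≤ C) (hs : 0 < s)
    (htail : ∀ t > 0, μ {a | t < g a} ≤ ENNReal.ofReal (C * exp (-(t / s)))) :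
    ∫ a, g a ∂μ ≤ C * s := by
  have hexp : IntegrableOn (fun t => C * exp (-s⁻¹ * t)) (Set.Ioi 0) volume :=
    (by simpa using exp_neg_integrableOn_Ioi 0 (inv_pos.2 hs) :
      IntegrableOn (fun t => exp (-s⁻¹ * t)) (Set.Ioi 0) volume).const_mul C
  have hlint : ∫⁻ a, ENNReal.ofReal (g a) ∂μ ≤ ENNReal.ofReal (C * s) := calc
    ∫⁻ a, ENNReal.ofReal (g a) ∂μ = ∫⁻ t in Set.Ioi 0, μ {a | t < g a} :=
      lintegral_eq_lintegral_meas_lt μ hg hgm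
    _ ≤ ∫⁻ t in Set.Ioi 0, ENNReal.ofReal (C * exp (-s⁻¹ * t)) := by
      refine setLIntegral_mono (by fun_prop) fun t ht => ?_
      simpa [div_eq_inv_mul] using htail t ht
    _ = ENNReal.ofReal (C * s) := by
      rw [← ofReal_integral_eq_lintegral_ofReal hexp
        (Filter.Eventually.of_forall fun t => by positivity), integral_const_mul,
        integral_exp_mul_Ioi (by simpa using hs) 0]
      congr 1
      field_simp
      simp
  rw [integral_eq_lintegral_of_nonneg_ae hg hgm.aestronglyMeasurable]
  exact ENNReal.toReal_le_of_le_ofReal (by positivity) hlint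

lemma integrable_exp_mul_sq_of_nonpos {Ω : Type*} [MeasurableSpace Ω] {μ : Measure Ω}
    [IsFiniteMeasure μ] {ξ : Ω → ℝ} (hξ : Measurable ξ) {t : ℝ} (ht : t ≤ 0) :
    Integrable (fun ω => exp (t * ξ ω ^ 2)) μ := by
  refine Integrable.of_bound (by fun_prop) 1 (Filter.Eventually.of_forall fun ω => ?_)
  rw [norm_of_nonneg (exp_pos _).le, exp_le_one_iff]
  exact mul_nonpos_of_nonpos_of_nonneg ht (sq_nonneg _)

lemma measureReal_sum_le_le_exp {Ω ι : Type*} [MeasurableSpace Ω] {μ : Measure Ω}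
    [IsFiniteMeasure μ] [Fintype ι] {X : ι → Ω → ℝ} (hindep : iIndepFun X μ)
    (hX : ∀ i, Measurable (X i)) {t c : ℝ} (ht : t ≤ 0)
    (hint : ∀ i, Integrable (fun ω => exp (t * X i ω)) μ) (hmgf : ∀ i, mgf (X i) μ t ≤ exp c)
    (a : ℝ) :
    μ.real {ω | ∑ i, X i ω ≤ a} ≤ exp (-t * a + Fintype.card ι * c) := by
  have hchernoff := measure_le_le_exp_mul_mgf (X := ∑ i, X i) a ht
    (hindep.integrable_exp_mul_sum (s := Finset.univ) hX fun i _ => hint i)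
  simp only [Finset.sum_apply] at hchernoff
  refine hchernoff.trans ?_
  rw [hindep.mgf_sum hX, exp_add]
  gcongr
  calc ∏ i, mgf (X i) μ t ≤ ∏ _i : ι, exp c :=
        Finset.prod_le_prod (fun i _ => mgf_nonneg) fun i _ => hmgf i
    _ = exp c ^ Fintype.card ι := Finset.prod_const _
    _ = exp (Fintype.card ι * c) := (exp_nat_mul c _).symm

/-- Chosen so that `exp (1 - b / (2 K²)) * 2 K² ≤ 1 / 4`: the part of `ξ²` above `b` then
carries at most a quarter of `𝔼 ξ² = 1`. -/
noncomputable def truncLevel (K : ℝ) : ℝ := max 1 (2 * K ^ 2 * (1 + log (8 * K ^ 2)))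

lemma truncLevel_pos (K : ℝ) : 0 < truncLevel K := one_pos.trans_le (le_max_left _ _)

lemma exp_one_sub_truncLevel_mul_le {K : ℝ} (hK : 0 < K) :
    exp (1 - truncLevel K / (2 * K ^ 2)) * (2 * K ^ 2) ≤ 1 / 4 := by
  have hK2 : 0 < 2 * K ^ 2 := by positivity
  have hexponent : 1 - truncLevel K / (2 * K ^ 2) ≤ -log (8 * K ^ 2) := by
    have : 2 * K ^ 2 * (1 + log (8 * K ^ 2)) ≤ truncLevel K := le_max_right _ _
    rw [sub_le_iff_le_add, ← sub_le_iff_le_add', le_div_iff₀ hK2]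
    linarith
  calc exp (1 - truncLevel K / (2 * K ^ 2)) * (2 * K ^ 2)
      ≤ exp (-log (8 * K ^ 2)) * (2 * K ^ 2) := by gcongr
    _ = 1 / 4 := by
      rw [exp_neg, exp_log (by positivity)]
      field_simp
      norm_num

section SquaredEntry

variable {Ω : Type*} [MeasureSpace Ω] {ξ : Ω → ℝ} {K : ℝ}

lemma integral_sq_sub_min_le (hK : 0 < K) (hξ : Measurable ξ) (htail : SubGTail ξ K)
    {b : ℝ} (hb : 0 ≤ b) :
    ∫ ω, (ξ ω ^ 2 - min (ξ ω ^ 2) b) ≤ exp (1 - b / (2 * K ^ 2)) * (2 * K ^ 2) := by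
  refine integral_le_of_meas_lt_le_exp
    (Filter.Eventually.of_forall fun ω => sub_nonneg.2 (min_le_left _ _)) (by fun_prop)
    (exp_pos _).le (by positivity) fun t ht => ?_
  have hsub : {ω | t < ξ ω ^ 2 - min (ξ ω ^ 2) b} ⊆ {ω | √(b + t) ≤ |ξ ω|} := by
    intro ω hω
    have : b + t < ξ ω ^ 2 := by
      simp only [Set.mem_ofPred_eq] at hω
      rcases le_total (ξ ω ^ 2) b with h | h
      · rw [min_eq_left h] at hω
        linarith
      · rw [min_eq_right h] at hω
        linarith
    exact (sqrt_le_sqrt this.le).trans_eq (sqrt_sq_eq_abs _)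
  refine (measure_mono hsub).trans ((htail _ (sqrt_nonneg _)).trans_eq ?_)
  rw [sq_sqrt (by positivity), ← exp_add]
  congr 2
  field_simp
  ring

variable [IsProbabilityMeasure (ℙ : Measure Ω)]

lemma integrable_min_sq (hξ : Measurable ξ) {b : ℝ} (hb : 0 ≤ b) :
    Integrable (fun ω => min (ξ ω ^ 2) b) :=
  Integrable.of_bound (by fun_prop) b (Filter.Eventually.of_forall fun ω => by
    rw [norm_of_nonneg (le_min (sq_nonneg _) hb)]
    exact min_le_right _ _)

lemma three_quarters_le_integral_min_sq (hK : 0 < K) (hξ : Measurable ξ)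
    (hvar : ∫ ω, ξ ω ^ 2 = 1) (htail : SubGTail ξ K) :
    3 / 4 ≤ ∫ ω, min (ξ ω ^ 2) (truncLevel K) := by
  -- `∫ ξ² = 1` forces integrability: the integral of a non-integrable function is `0`.
  have hsq : Integrable (fun ω => ξ ω ^ 2) := by
    by_contra h
    rw [integral_undef h] at hvar
    exact zero_ne_one hvar
  have := integral_sq_sub_min_le hK hξ htail (truncLevel_pos K).le
  rw [integral_sub hsq (integrable_min_sq hξ (truncLevel_pos K).le), hvar] at this
  linarith [exp_one_sub_truncLevel_mul_le hK]

lemma mgf_sq_neg_inv_truncLevel_le (hK : 0 < K) (hξ : Measurable ξ)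
    (hvar : ∫ ω, ξ ω ^ 2 = 1) (htail : SubGTail ξ K) :
    mgf (fun ω => ξ ω ^ 2) ℙ (-(truncLevel K)⁻¹) ≤ exp (-(3 / (8 * truncLevel K))) := by
  have hmin := three_quarters_le_integral_min_sq hK hξ hvar htail
  set b := truncLevel K
  have hb : 0 < b := truncLevel_pos K
  have hmin_int := integrable_min_sq hξ hb.le
  have hpointwise : ∀ ω, exp (-b⁻¹ * ξ ω ^ 2) ≤ 1 - (1 - exp (-1)) * (min (ξ ω ^ 2) b / b) :=
    fun ω => by
      simpa [neg_mul, inv_mul_eq_div] using exp_neg_div_le_one_sub_min (sq_nonneg (ξ ω)) hb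
  calc mgf (fun ω => ξ ω ^ 2) ℙ (-b⁻¹) = ∫ ω, exp (-b⁻¹ * ξ ω ^ 2) := rfl
    _ ≤ ∫ ω, (1 - (1 - exp (-1)) * (min (ξ ω ^ 2) b / b)) :=
      integral_mono (integrable_exp_mul_sq_of_nonpos hξ (by simpa using hb.le))
        ((integrable_const 1).sub ((hmin_int.div_const b).const_mul _)) hpointwise
    _ = 1 - (1 - exp (-1)) * (∫ ω, min (ξ ω ^ 2) b) / b := by
      rw [integral_sub (integrable_const 1) ((hmin_int.div_const b).const_mul _),
        integral_const_mul, integral_div]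
      simp [mul_div_assoc]
    _ ≤ 1 - 3 / (8 * b) := by
      have : 3 / 8 ≤ (1 - exp (-1)) * ∫ ω, min (ξ ω ^ 2) b := by
        nlinarith [exp_neg_one_lt_half]
      rw [sub_le_sub_iff_left, div_le_div_iff₀ (by positivity) hb]
      nlinarith
    _ ≤ exp (-(3 / (8 * b))) := by linarith [add_one_le_exp (-(3 / (8 * b)))]

end SquaredEntry

/-- For a random matrix with i.i.d. mean-zero unit-variance subgaussian
entries, `ℙ {‖A‖ ≤ √n / 2} ≤ exp (-c₁ n²)`. -/
theorem opNorm_small_ball (K : ℝ) (hK : 0 < K) :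
    ∃ c₁ : ℝ, 0 < c₁ ∧
      ∀ (n : ℕ) (Ω : Type) [MeasureSpace Ω] [IsProbabilityMeasure (ℙ : Measure Ω)]
        (A : Ω → Matrix (Fin n) (Fin n) ℝ), IIDEntries A K →
        ℙ {ω | opNorm (A ω) ≤ Real.sqrt n / 2}
          ≤ ENNReal.ofReal (Real.exp (-c₁ * n ^ 2)) := by
  have hb := truncLevel_pos K
  have ht : -(truncLevel K)⁻¹ ≤ 0 := neg_nonpos.2 (inv_pos.2 hb).le
  refine ⟨1 / (8 * truncLevel K), by positivity, fun n Ω _ _ A hA => ?_⟩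
  obtain ⟨hmeas, hindep, -, -, hvar, htail⟩ := hA
  have hsmall : {ω | opNorm (A ω) ≤ √n / 2}
      ⊆ {ω | ∑ p : Fin n × Fin n, A ω p.1 p.2 ^ 2 ≤ n ^ 2 / 4} := fun ω hω => calc
    ∑ p : Fin n × Fin n, A ω p.1 p.2 ^ 2 = ∑ i, ∑ j, A ω i j ^ 2 := Fintype.sum_prod_type _
    _ ≤ n * opNorm (A ω) ^ 2 := sum_sq_entries_le_card_mul_opNorm_sq (A ω)
    _ ≤ n * (√n / 2) ^ 2 := by gcongr; exacts [norm_nonneg _, hω]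
    _ = n ^ 2 / 4 := by rw [div_pow, sq_sqrt n.cast_nonneg]; ring
  have hchernoff := measureReal_sum_le_le_exp
    (hindep.comp (fun _ x => x ^ 2) fun _ => by fun_prop)
    (fun p => (hmeas p.1 p.2).pow_const 2) ht
    (fun p => integrable_exp_mul_sq_of_nonpos (hmeas p.1 p.2) ht)
    (fun p => mgf_sq_neg_inv_truncLevel_le hK (hmeas p.1 p.2) (hvar p.1 p.2) (htail p.1 p.2))
    ((n : ℝ) ^ 2 / 4)
  refine (measure_mono hsmall).trans ?_
  rw [← ofReal_measureReal]
  refine ENNReal.ofReal_le_ofReal (hchernoff.trans_eq ?_)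
  rw [Fintype.card_prod, Fintype.card_fin]
  congr 1
  push_cast
  field_simp
  ring
end

section
/- Let t > 0 and let A be an invertible n×n real matrix such that Σ_{i=1}^{n} s_i(A⁻¹)² ≤ n/t. Then the number of indices i ∈ {1,…,n} for which dist(col_i(A), span{col_j(A) : j ≠ i}) ≥ √(t/2) is at least n/2. -/
open MeasureTheory ProbabilityTheory Real

open Matrix Metric
open scoped Finset RealInnerProductSpace

/-! The rows of `A⁻¹` are biorthogonal to the columns of `A`: row `i` is orthogonal to every
column `j ≠ i` and has inner product `1` with column `i`. Hence
`dist (colᵢ A, span {colⱼ A : j ≠ i}) ≥ 1 / ‖rowᵢ A⁻¹‖`. The squared row norms of `A⁻¹` add up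
to its squared Hilbert–Schmidt norm `∑ sᵢ(A⁻¹)² ≤ n / t`, so by Markov's inequality at most
`n / 2` of them exceed `2 / t`, and every other index gives a column at distance `≥ √(t / 2)`. -/

lemma sum_sq_svRect {m n : ℕ} (B : Matrix (Fin m) (Fin n) ℝ) :
    ∑ i, svRect B i ^ 2 = ∑ i, ∑ j, B i j ^ 2 := by
  have hH := isHermitian_mul_conjTranspose_self B
  calc ∑ i, svRect B i ^ 2 = ∑ i, hH.eigenvalues i :=
        Finset.sum_congr rfl fun i _ => sq_sqrt (eigenvalues_self_mul_conjTranspose_nonneg B i)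
    _ = (B * Bᴴ).trace := by rw [hH.trace_eq_sum_eigenvalues]; simp
    _ = ∑ i, ∑ j, B i j ^ 2 := by simp [trace, mul_apply, sq]

section InnerProductSpace

variable {E : Type*} [NormedAddCommGroup E] [InnerProductSpace ℝ E]

lemma inner_le_norm_mul_infDist {K : Submodule ℝ E} {u : E} (hu : u ∈ Kᗮ) (x : E) :
    ⟪x, u⟫ ≤ ‖u‖ * infDist x K := by
  rcases eq_or_ne u 0 with rfl | hu0
  · simp
  have hpos : 0 < ‖u‖ := norm_pos_iff.mpr hu0
  rw [← div_le_iff₀' hpos, le_infDist ⟨0, K.zero_mem⟩]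
  intro y hy
  rw [div_le_iff₀ hpos, dist_eq_norm]
  calc ⟪x, u⟫ = ⟪x - y, u⟫ := by rw [inner_sub_left, (K.mem_orthogonal u).1 hu y hy, sub_zero]
    _ ≤ ‖x - y‖ * ‖u‖ := real_inner_le_norm _ _

lemma one_le_norm_mul_infDist_span_of_biorthogonal {ι : Type*} [DecidableEq ι] {v w : ι → E}
    (hvw : ∀ i j, ⟪v j, w i⟫ = if i = j then 1 else 0) (i : ι) :
    1 ≤ ‖w i‖ * infDist (v i) (Submodule.span ℝ (v '' {j | j ≠ i})) := by
  have hw : w i ∈ (Submodule.span ℝ (v '' {j | j ≠ i}))ᗮ := by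
    rw [Submodule.mem_orthogonal]
    intro y hy
    induction hy using Submodule.span_induction with
    | mem x hx =>
      obtain ⟨j, hj, rfl⟩ := hx
      rw [hvw, if_neg (Ne.symm hj)]
    | zero => simp
    | add x y _ _ hx hy => rw [inner_add_left, hx, hy, add_zero]
    | smul a x _ hx => rw [inner_smul_left, hx, mul_zero]
  simpa [hvw] using inner_le_norm_mul_infDist hw (v i)

end InnerProductSpace

lemma inner_colE_ev_row {k m n : ℕ} (A : Matrix (Fin m) (Fin n) ℝ) (B : Matrix (Fin k) (Fin m) ℝ)
    (i : Fin k) (j : Fin n) : ⟪colE A j, ev (B i)⟫ = (B * A) i j := by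
  simp [colE, ev, PiLp.inner_apply, mul_apply, mul_comm]

lemma card_div_two_le_card_filter_le_two_mul {ι : Type*} [Fintype ι] {f : ι → ℝ}
    (hf : ∀ i, 0 ≤ f i) {m : ℝ} (hm : 0 < m) (hsum : ∑ i, f i ≤ Fintype.card ι * m) :
    (Fintype.card ι : ℝ) / 2 ≤ #{i | f i ≤ 2 * m} := by
  have markov : #{i | 2 * m < f i} * (2 * m) ≤ ∑ i, f i :=
    calc #{i | 2 * m < f i} * (2 * m) ≤ ∑ i ∈ {i | 2 * m < f i}, f i := by
          simpa using
            Finset.card_nsmul_le_sum _ f (2 * m) fun i hi => (Finset.mem_filter.mp hi).2.le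
      _ ≤ ∑ i, f i := Finset.sum_le_sum_of_subset_of_nonneg (Finset.subset_univ _)
          fun i _ _ => hf i
  have hcard : (#{i | f i ≤ 2 * m} : ℝ) + #{i | 2 * m < f i} = Fintype.card ι := by
    have := Finset.card_filter_add_card_filter_not (s := .univ) (fun i => f i ≤ 2 * m)
    simp only [not_le, Finset.card_univ] at this
    exact_mod_cast this
  nlinarith

/-- If `A` is invertible and `∑ᵢ sᵢ(A⁻¹)² ≤ n / t` then for at least `n / 2`
indices `i` the distance from `colᵢ(A)` to the span of the other columns is at least `√(t/2)`. -/
theorem many_far_columns (n : ℕ) (t : ℝ) (ht : 0 < t) (A : Matrix (Fin n) (Fin n) ℝ)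
    (hA : IsUnit A) (hsum : ∑ i, svRect A⁻¹ i ^ 2 ≤ (n : ℝ) / t) :
    (n : ℝ) / 2 ≤
      ({i : Fin n | Real.sqrt (t / 2) ≤ Metric.infDist (colE A i)
        (Submodule.span ℝ (colE A '' {j | j ≠ i}) : Set (EuclideanSpace ℝ (Fin n)))}).ncard := by
  have hbiorth (i j : Fin n) : ⟪colE A j, ev (A⁻¹ i)⟫ = if i = j then 1 else 0 := by
    rw [inner_colE_ev_row, nonsing_inv_mul A ((isUnit_iff_isUnit_det A).mp hA), one_apply]
  have hrows : ∑ i, ‖ev (A⁻¹ i)‖ ^ 2 ≤ Fintype.card (Fin n) * t⁻¹ := by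
    simpa [EuclideanSpace.real_norm_sq_eq, ev, ← sum_sq_svRect, div_eq_mul_inv] using hsum
  have hfar (i : Fin n) (hi : ‖ev (A⁻¹ i)‖ ^ 2 ≤ 2 * t⁻¹) : √(t / 2) ≤ infDist (colE A i)
      (Submodule.span ℝ (colE A '' {j | j ≠ i}) : Set (EuclideanSpace ℝ (Fin n))) := by
    have hdist := one_le_norm_mul_infDist_span_of_biorthogonal hbiorth i
    have hw : ‖ev (A⁻¹ i)‖ ^ 2 * t ≤ 2 := by rwa [← le_div_iff₀ ht, div_eq_mul_inv]
    rw [Real.sqrt_le_left infDist_nonneg]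
    nlinarith [mul_le_mul hdist hdist zero_le_one (by positivity)]
  calc (n : ℝ) / 2 ≤ #{i | ‖ev (A⁻¹ i)‖ ^ 2 ≤ 2 * t⁻¹} := by
        simpa using
          card_div_two_le_card_filter_le_two_mul (fun i => sq_nonneg _) (inv_pos.2 ht) hrows
    _ ≤ _ := by
        rw [Nat.cast_le, ← Set.ncard_coe_finset]
        exact Set.ncard_le_ncard fun i hi => hfar i (by simpa using hi)
end

section
/- Let A be an n×n real matrix, let 1 ≤ ℓ ≤ k ≤ n, and let z_1, …, z_k be orthonormal vectors in ℝⁿ such that ‖A·z_i‖₂ ≤ s for every i ≤ k, where s ≥ 0. Let Z be the k×n matrix whose rows are z_1, …, z_k. Suppose J ⊆ {1,…,n} with |J| = ℓ satisfies s_ℓ(Z_J) ≥ δ for some δ > 0, where Z_J = Z·P_J. Then for at least ℓ/2 indices i ∈ J one has dist(col_i(A), span{col_j(A) : j ∈ {1,…,n}∖J}) ≤ √2·s·√k/(δ·√ℓ). -/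
open MeasureTheory ProbabilityTheory Real

/-!
Let `M` be the `k × ℓ` matrix formed by the columns of `Z` indexed by `J`. The eigenvectors of
`Z_J Z_Jᵀ = M Mᵀ` with eigenvalue at least `δ²` span a subspace of dimension at least `ℓ` on which
`‖Mᵀ v‖ ≥ δ ‖v‖`, so `Mᵀ : ℝᵏ → ℝ^J` has a right inverse `G` with `‖G‖ ≤ 1 / δ`.
For `i ∈ J` the vector `y = Zᵀ G eᵢ` agrees with `eᵢ` on `J`, hence `colᵢ(A) - A y` lies in the span
of the columns outside `J` and the distance in question is at most `‖A Zᵀ G eᵢ‖`. Summing squares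
over `i ∈ J` gives the squared Hilbert–Schmidt norm of `A Zᵀ G`, which is at most
`‖G‖² ∑ₘ ‖A zₘ‖² ≤ k s² / δ²`; by Chebyshev's inequality at most `ℓ / 2` of the distances exceed
`√2 s √k / (δ √ℓ)`.
-/

open Module Matrix Finset
open scoped InnerProductSpace InnerProduct RealInnerProductSpace

section RightInverse
variable {𝕜 E F : Type*} [NontriviallyNormedField 𝕜] [CompleteSpace 𝕜]
  [NormedAddCommGroup E] [NormedSpace 𝕜 E] [FiniteDimensional 𝕜 E]
  [NormedAddCommGroup F] [NormedSpace 𝕜 F] [FiniteDimensional 𝕜 F]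

theorem LinearMap.exists_rightInverse_norm_le_of_le_norm_apply (T : E →ₗ[𝕜] F)
    (V : Submodule 𝕜 E) (hV : finrank 𝕜 F ≤ finrank 𝕜 V) {δ : ℝ} (hδ : 0 < δ)
    (hT : ∀ v ∈ V, δ * ‖v‖ ≤ ‖T v‖) :
    ∃ G : F →L[𝕜] E, (∀ y, T (G y) = y) ∧ ‖G‖ ≤ δ⁻¹ := by
  have hinj : Function.Injective (T.domRestrict V) := by
    refine (injective_iff_map_eq_zero _).mpr fun v hv => Subtype.ext (norm_eq_zero.mp ?_)
    have h := hT v v.2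
    rw [show T v = 0 from hv, norm_zero] at h
    exact le_antisymm (by nlinarith [norm_nonneg (v : E)]) (norm_nonneg _)
  let e := (T.domRestrict V).linearEquivOfInjective hinj
    (le_antisymm (LinearMap.finrank_le_finrank_of_injective hinj) hV)
  have hTe : ∀ y, T (e.symm y) = y := e.apply_symm_apply
  refine ⟨(V.subtype ∘ₗ e.symm.toLinearMap).toContinuousLinearMap, hTe, ?_⟩
  refine ContinuousLinearMap.opNorm_le_bound _ (inv_nonneg.mpr hδ.le) fun y => ?_
  have h := hT _ (e.symm y).2
  rw [hTe] at h
  rwa [le_inv_mul_iff₀ hδ]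
end RightInverse

section HilbertSchmidt
variable {𝕜 E E' F ι κ : Type*} [RCLike 𝕜] [Fintype ι] [Fintype κ]
  [NormedAddCommGroup E] [InnerProductSpace 𝕜 E] [CompleteSpace E]
  [NormedAddCommGroup F] [InnerProductSpace 𝕜 F] [CompleteSpace F]

open ContinuousLinearMap in
theorem OrthonormalBasis.sum_sq_norm_apply_eq_sum_sq_norm_adjoint_apply
    (b : OrthonormalBasis ι 𝕜 E) (c : OrthonormalBasis κ 𝕜 F) (L : E →L[𝕜] F) :
    ∑ i, ‖L (b i)‖ ^ 2 = ∑ j, ‖(L†) (c j)‖ ^ 2 := by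
  calc ∑ i, ‖L (b i)‖ ^ 2 = ∑ j, ∑ i, ‖⟪(L†) (c j), b i⟫_𝕜‖ ^ 2 := by
        rw [sum_comm]
        simp_rw [adjoint_inner_left, c.sum_sq_norm_inner_right]
    _ = ∑ j, ‖(L†) (c j)‖ ^ 2 := by simp_rw [b.sum_sq_norm_inner_left]

variable [NormedAddCommGroup E'] [InnerProductSpace 𝕜 E'] [CompleteSpace E'] [FiniteDimensional 𝕜 F]

open ContinuousLinearMap in
theorem OrthonormalBasis.sum_sq_norm_comp_apply_le
    (b : OrthonormalBasis ι 𝕜 E) (b' : OrthonormalBasis κ 𝕜 E') (Φ : E' →L[𝕜] F)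
    (G : E →L[𝕜] E') : ∑ i, ‖Φ (G (b i))‖ ^ 2 ≤ ‖G‖ ^ 2 * ∑ m, ‖Φ (b' m)‖ ^ 2 := by
  let c := stdOrthonormalBasis 𝕜 F
  calc ∑ i, ‖Φ (G (b i))‖ ^ 2 = ∑ j, ‖(G†) ((Φ†) (c j))‖ ^ 2 := by
        simpa only [adjoint_comp, ContinuousLinearMap.comp_apply] using
          b.sum_sq_norm_apply_eq_sum_sq_norm_adjoint_apply c (Φ ∘L G)
    _ ≤ ∑ j, ‖G‖ ^ 2 * ‖(Φ†) (c j)‖ ^ 2 := by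
        gcongr with j
        rw [← mul_pow, ← adjoint.norm_map G]
        gcongr
        exact le_opNorm _ _
    _ = ‖G‖ ^ 2 * ∑ m, ‖Φ (b' m)‖ ^ 2 := by
        rw [← mul_sum, b'.sum_sq_norm_apply_eq_sum_sq_norm_adjoint_apply c]
end HilbertSchmidt

namespace Matrix.IsHermitian
variable {m : Type*} [Fintype m] [DecidableEq m] {H : Matrix m m ℝ} (hH : H.IsHermitian)
include hH

theorem inner_eigenvectorBasis_toEuclideanLin (i : m) (v : EuclideanSpace ℝ m) :
    ⟪hH.eigenvectorBasis i, toEuclideanLin H v⟫ =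
      hH.eigenvalues i * ⟪hH.eigenvectorBasis i, v⟫ := by
  rw [← isSymmetric_toEuclideanLin_iff.mpr hH, toLpLin_apply, mulVec_eigenvectorBasis]
  exact real_inner_smul_left _ _ _

theorem inner_toEuclideanLin_self_eq_sum (v : EuclideanSpace ℝ m) :
    ⟪v, toEuclideanLin H v⟫ = ∑ i, hH.eigenvalues i * ⟪hH.eigenvectorBasis i, v⟫ ^ 2 := by
  rw [← hH.eigenvectorBasis.sum_inner_mul_inner]
  refine sum_congr rfl fun i _ => ?_
  rw [hH.inner_eigenvectorBasis_toEuclideanLin, real_inner_comm]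
  ring

theorem mul_norm_sq_le_inner_toEuclideanLin_self {c : ℝ} {v : EuclideanSpace ℝ m}
    (hv : v ∈ Submodule.span ℝ (hH.eigenvectorBasis '' {i | c ≤ hH.eigenvalues i})) :
    c * ‖v‖ ^ 2 ≤ ⟪v, toEuclideanLin H v⟫ := by
  rw [hH.inner_toEuclideanLin_self_eq_sum, ← hH.eigenvectorBasis.sum_sq_inner_right, mul_sum]
  refine sum_le_sum fun i _ => ?_
  by_cases hi : c ≤ hH.eigenvalues i
  · exact mul_le_mul_of_nonneg_right hi (sq_nonneg _)
  · have hspan : Submodule.span ℝ (hH.eigenvectorBasis '' {i | c ≤ hH.eigenvalues i}) ≤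
        (ℝ ∙ hH.eigenvectorBasis i)ᗮ := by
      refine Submodule.span_le.mpr ?_
      rintro _ ⟨j, hj, rfl⟩
      exact Submodule.mem_orthogonal_singleton_iff_inner_right.mpr
        (hH.eigenvectorBasis.orthonormal.2 (ne_of_mem_of_not_mem hj hi).symm)
    have : ⟪hH.eigenvectorBasis i, v⟫ = 0 :=
      Submodule.mem_orthogonal_singleton_iff_inner_right.mp (hspan hv)
    simp [this]
end Matrix.IsHermitian

theorem Matrix.inner_toEuclideanLin_mul_conjTranspose_self {m n : Type*} [Fintype m] [Fintype n]
    [DecidableEq m] [DecidableEq n] (M : Matrix m n ℝ) (v : EuclideanSpace ℝ m) :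
    ⟪v, toEuclideanLin (M * Mᴴ) v⟫ = ‖toEuclideanLin Mᴴ v‖ ^ 2 := by
  rw [toEuclideanLin_conjTranspose_eq_adjoint, ← real_inner_self_eq_norm_sq,
    LinearMap.adjoint_inner_right, ← toEuclideanLin_conjTranspose_eq_adjoint, real_inner_comm]
  simp [toLpLin_apply, mulVec_mulVec]

theorem colRestrict_mul_conjTranspose {m n : ℕ} (B : Matrix (Fin m) (Fin n) ℝ)
    (J : Finset (Fin n)) :
    colRestrict B J * (colRestrict B J)ᴴ =
      B.submatrix id ((↑) : J → Fin n) * (B.submatrix id ((↑) : J → Fin n))ᴴ := by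
  ext a b
  simp only [mul_apply, colRestrict, conjTranspose_apply, submatrix_apply, id]
  rw [sum_coe_sort J (fun j => B a j * star (B b j)),
    ← sum_subset (subset_univ J) fun j _ hj => by simp [hj]]
  exact sum_congr rfl fun j hj => by simp [hj]

theorem Metric.infDist_le_norm_sum_smul {ι E : Type*} [Fintype ι] [DecidableEq ι]
    [NormedAddCommGroup E] [NormedSpace ℝ E]
    (c : ι → E) (J : Finset ι) {i : ι} (hi : i ∈ J) (y : ι → ℝ)
    (hy : ∀ j ∈ J, y j = if j = i then 1 else 0) :
    Metric.infDist (c i) (Submodule.span ℝ (c '' {j | j ∉ J}) : Set E) ≤ ‖∑ j, y j • c j‖ := by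
  have hsplit : ∑ j, y j • c j = c i + ∑ j ∈ univ.filter (· ∉ J), y j • c j := by
    rw [← sum_filter_add_sum_filter_not univ (· ∈ J), filter_mem_eq_inter, univ_inter,
      sum_congr rfl fun j hj => by rw [hy j hj, ite_smul, one_smul, zero_smul],
      sum_ite_eq' J i, if_pos hi]
  have hmem : c i - ∑ j, y j • c j ∈ Submodule.span ℝ (c '' {j | j ∉ J}) := by
    rw [hsplit, sub_add_cancel_left, neg_mem_iff]
    exact Submodule.sum_mem _ fun j hj =>
      Submodule.smul_mem _ _ (Submodule.subset_span ⟨j, (mem_filter.mp hj).2, rfl⟩)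
  simpa [dist_eq_norm] using Metric.infDist_le_dist_of_mem (x := c i) hmem

theorem Finset.card_div_two_le_ncard_of_sum_sq_le {ι : Type*} (J : Finset ι) (f : ι → ℝ)
    {τ : ℝ} (hτ : 0 ≤ τ) (h : ∑ i ∈ J, f i ^ 2 ≤ τ ^ 2 * #J / 2) :
    (#J : ℝ) / 2 ≤ {i | i ∈ J ∧ f i ≤ τ}.ncard := by
  rw [show {i | i ∈ J ∧ f i ≤ τ} = ↑(J.filter (f · ≤ τ)) by ext; simp, Set.ncard_coe_finset]
  have hcard : (#(J.filter (f · ≤ τ)) : ℝ) + #(J.filter (¬ f · ≤ τ)) = #J := by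
    exact_mod_cast card_filter_add_card_filter_not _
  rcases (J.filter (¬ f · ≤ τ)).eq_empty_or_nonempty with hbad | hbad
  · rw [hbad, card_empty, Nat.cast_zero, add_zero] at hcard
    linarith [(#J).cast_nonneg (α := ℝ)]
  have hlt : #(J.filter (¬ f · ≤ τ)) * τ ^ 2 < τ ^ 2 * #J / 2 := calc
    #(J.filter (¬ f · ≤ τ)) * τ ^ 2 = ∑ _ ∈ J.filter (¬ f · ≤ τ), τ ^ 2 := by
      rw [sum_const, nsmul_eq_mul]
    _ < ∑ i ∈ J.filter (¬ f · ≤ τ), f i ^ 2 := sum_lt_sum_of_nonempty hbad fun i hi =>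
      pow_lt_pow_left₀ (not_le.mp (mem_filter.mp hi).2) hτ two_ne_zero
    _ ≤ ∑ i ∈ J, f i ^ 2 := sum_le_sum_of_subset_of_nonneg (filter_subset _ _) fun _ _ _ =>
      sq_nonneg _
    _ ≤ τ ^ 2 * #J / 2 := h
  nlinarith

theorem exists_rightInverse_submatrix_conjTranspose_of_le_ncard_svRect {k n : ℕ}
    (Z : Matrix (Fin k) (Fin n) ℝ) (J : Finset (Fin n)) {δ : ℝ} (hδ : 0 < δ)
    (hsv : #J ≤ {i : Fin k | δ ≤ svRect (colRestrict Z J) i}.ncard) :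
    ∃ G : EuclideanSpace ℝ J →L[ℝ] EuclideanSpace ℝ (Fin k),
      (∀ y, toEuclideanLin (Z.submatrix id ((↑) : J → Fin n))ᴴ (G y) = y) ∧ ‖G‖ ≤ δ⁻¹ := by
  have hH := isHermitian_mul_conjTranspose_self (colRestrict Z J)
  set S := {m | δ ^ 2 ≤ hH.eigenvalues m}
  have hS : {i : Fin k | δ ≤ svRect (colRestrict Z J) i} = S := by
    ext m
    exact Real.le_sqrt' hδ
  refine (toEuclideanLin (Z.submatrix id ((↑) : J → Fin n))ᴴ)
    |>.exists_rightInverse_norm_le_of_le_norm_apply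
      (Submodule.span ℝ (hH.eigenvectorBasis '' S)) ?_ hδ fun v hv => ?_
  · rw [Set.image_eq_range, finrank_span_eq_card (b := fun m : S => hH.eigenvectorBasis m)
      (hH.eigenvectorBasis.orthonormal.linearIndependent.comp _ Subtype.val_injective),
      finrank_euclideanSpace, Fintype.card_coe, ← Nat.card_eq_fintype_card, Nat.card_coe_set_eq,
      ← hS]
    exact hsv
  · have h := hH.mul_norm_sq_le_inner_toEuclideanLin_self hv
    rw [colRestrict_mul_conjTranspose, inner_toEuclideanLin_mul_conjTranspose_self, ← mul_pow] at h
    exact (pow_le_pow_iff_left₀ (by positivity) (norm_nonneg _) two_ne_zero).mp h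

theorem Matrix.sum_sq_norm_mulVec_comp_le {m k : ℕ} {ι E : Type*} [Fintype ι]
    [NormedAddCommGroup E] [InnerProductSpace ℝ E] [CompleteSpace E]
    (B : Matrix (Fin m) (Fin k) ℝ) (b : OrthonormalBasis ι ℝ E)
    (G : E →L[ℝ] EuclideanSpace ℝ (Fin k)) :
    ∑ i, ‖ev (B *ᵥ G (b i))‖ ^ 2 ≤ ‖G‖ ^ 2 * ∑ j, ‖colE B j‖ ^ 2 := by
  have hcol : ∀ j, toEuclideanLin B (EuclideanSpace.basisFun _ ℝ j) = colE B j := fun j => by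
    ext r
    simp [colE, ev, toLpLin_apply]
  have h := b.sum_sq_norm_comp_apply_le (EuclideanSpace.basisFun _ ℝ)
    (toEuclideanLin B).toContinuousLinearMap G
  simp only [LinearMap.coe_toContinuousLinearMap', hcol] at h
  exact h

theorem infDist_colE_le_norm_mul_transpose_mulVec {m n k : ℕ} (A : Matrix (Fin m) (Fin n) ℝ)
    (Z : Matrix (Fin k) (Fin n) ℝ) (J : Finset (Fin n)) (i : J) (g : EuclideanSpace ℝ (Fin k))
    (hg : toEuclideanLin (Z.submatrix id ((↑) : J → Fin n))ᴴ g = EuclideanSpace.single i 1) :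
    Metric.infDist (colE A i)
      (Submodule.span ℝ (colE A '' {j | j ∉ J}) : Set (EuclideanSpace ℝ (Fin m))) ≤
        ‖ev ((A * Zᵀ) *ᵥ g)‖ := by
  have hAy : ev ((A * Zᵀ) *ᵥ g) = ∑ j, (Zᵀ *ᵥ g) j • colE A j := by
    ext r
    simp [colE, ev, ← mulVec_mulVec, mulVec, dotProduct, mul_comm]
  rw [hAy]
  refine Metric.infDist_le_norm_sum_smul (colE A) J i.2 _ fun j hj => ?_
  calc (Zᵀ *ᵥ g) j = EuclideanSpace.single i (1 : ℝ) ⟨j, hj⟩ := congr($hg ⟨j, hj⟩)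
    _ = if j = i then 1 else 0 := by simp [Subtype.ext_iff]

theorem dist_columns_bound_general (n k ℓ : ℕ) (hℓ : 1 ≤ ℓ)
    (A : Matrix (Fin n) (Fin n) ℝ) (s : ℝ) (hs : 0 ≤ s)
    (z : Fin k → EuclideanSpace ℝ (Fin n))
    (hAz : ∀ i : Fin k, ‖ev (A.mulVec fun j => z i j)‖ ≤ s)
    (Z : Matrix (Fin k) (Fin n) ℝ) (hZ : ∀ i j, Z i j = z i j)
    (J : Finset (Fin n)) (hJ : J.card = ℓ) (δ : ℝ) (hδ : 0 < δ)
    (hsv : ℓ ≤ {i : Fin k | δ ≤ svRect (colRestrict Z J) i}.ncard) :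
    (ℓ : ℝ) / 2 ≤
      ({i : Fin n | i ∈ J ∧ Metric.infDist (colE A i)
          (Submodule.span ℝ (colE A '' {j | j ∉ J}) : Set (EuclideanSpace ℝ (Fin n)))
        ≤ Real.sqrt 2 * s * Real.sqrt k / (δ * Real.sqrt ℓ)}).ncard := by
  obtain ⟨G, hG, hGnorm⟩ :=
    exists_rightInverse_submatrix_conjTranspose_of_le_ncard_svRect Z J hδ (hJ ▸ hsv)
  have hcol : ∀ m, colE (A * Zᵀ) m = ev (A *ᵥ fun j => z m j) := fun m => by
    ext r
    simp [colE, ev, mul_apply, mulVec, dotProduct, hZ]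
  have hτ : δ⁻¹ ^ 2 * ∑ _m : Fin k, s ^ 2 =
      (Real.sqrt 2 * s * Real.sqrt k / (δ * Real.sqrt ℓ)) ^ 2 * ℓ / 2 := by
    have hℓ0 : (ℓ : ℝ) ≠ 0 := Nat.cast_ne_zero.mpr (by omega)
    rw [sum_const, card_univ, Fintype.card_fin, nsmul_eq_mul, div_pow, mul_pow, mul_pow, mul_pow,
      sq_sqrt zero_le_two, sq_sqrt k.cast_nonneg, sq_sqrt ℓ.cast_nonneg]
    field_simp
  rw [← hJ] at hτ ⊢
  refine J.card_div_two_le_ncard_of_sum_sq_le _ (by positivity) ?_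
  calc _ = ∑ i : J, Metric.infDist (colE A i)
        (Submodule.span ℝ (colE A '' {j | j ∉ J}) : Set (EuclideanSpace ℝ (Fin n))) ^ 2 :=
        (sum_coe_sort _ _).symm
    _ ≤ ∑ i : J, ‖ev ((A * Zᵀ) *ᵥ G (EuclideanSpace.basisFun J ℝ i))‖ ^ 2 := by
      gcongr with i
      exacts [Metric.infDist_nonneg,
        infDist_colE_le_norm_mul_transpose_mulVec A Z J i _ (by simpa using hG _)]
    _ ≤ ‖G‖ ^ 2 * ∑ m, ‖colE (A * Zᵀ) m‖ ^ 2 := sum_sq_norm_mulVec_comp_le _ _ G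
    _ ≤ δ⁻¹ ^ 2 * ∑ _m : Fin k, s ^ 2 := by
      gcongr with m
      exact hcol m ▸ hAz m
    _ = _ := hτ

/-- If `z₁, …, z_k` are orthonormal with `‖A zᵢ‖₂ ≤ s`, `Z` is the `k × n`
matrix with rows `zᵢ`, and `J` with `|J| = ℓ` satisfies `s_ℓ(Z_J) ≥ δ` (expressed by saying that
at least `ℓ` singular values of `Z_J` are `≥ δ`), then for at least `ℓ / 2` indices `i ∈ J` one
has `dist (colᵢ(A), span {colⱼ(A) : j ∉ J}) ≤ √2 s √k / (δ √ℓ)`. -/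
theorem dist_columns_bound (n k ℓ : ℕ) (hℓ : 1 ≤ ℓ) (hlk : ℓ ≤ k) (hkn : k ≤ n)
    (A : Matrix (Fin n) (Fin n) ℝ) (s : ℝ) (hs : 0 ≤ s)
    (z : Fin k → EuclideanSpace ℝ (Fin n)) (hz : Orthonormal ℝ z)
    (hAz : ∀ i : Fin k, ‖ev (A.mulVec fun j => z i j)‖ ≤ s)
    (Z : Matrix (Fin k) (Fin n) ℝ) (hZ : ∀ i j, Z i j = z i j)
    (J : Finset (Fin n)) (hJ : J.card = ℓ) (δ : ℝ) (hδ : 0 < δ)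
    (hsv : ℓ ≤ {i : Fin k | δ ≤ svRect (colRestrict Z J) i}.ncard) :
    (ℓ : ℝ) / 2 ≤
      ({i : Fin n | i ∈ J ∧ Metric.infDist (colE A i)
          (Submodule.span ℝ (colE A '' {j | j ∉ J}) : Set (EuclideanSpace ℝ (Fin n)))
        ≤ Real.sqrt 2 * s * Real.sqrt k / (δ * Real.sqrt ℓ)}).ncard :=
  dist_columns_bound_general n k ℓ hℓ A s hs z hAz Z hZ J hJ δ hδ hsv
end
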